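/- arXiv:2404.06326 — 3 statements merged into one kernel-verified Lean document; each statement's English description precedes it below -/
import Mathlib

section
/- (Proposition, minimum-support cut-off for the observable diameter.) Let K = (G, M, I) be a finite formal context, s ∈ [0,1], and suppose the set A_s := {α ∈ [0,1/2] : ObsDiam(D_s(K); −α) > 0} is nonempty; put α_{−1} := sup A_s and let σ_{−1} denote the smallest positive value attained by α ↦ ObsDiam(D_s(K); −α) on [0,1/2] (well defined since this function takes only finitely many values). Then for every α ∈ [0,1/2] with α > α_{−1}, one has ObsDiam(D(K); −α) ≤ σ_{−1}. -/
open Set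

/-- Attribute derivation `A'` of an object set. -/
def extentPrime {G M : Type*} (I : G → M → Prop) (A : Set G) : Set M :=
  {m | ∀ g ∈ A, I g m}

/-- Object derivation `B'` of an attribute set. -/
def intentPrime {G M : Type*} (I : G → M → Prop) (B : Set M) : Set G :=
  {g | ∀ m ∈ B, I g m}

/-- `(A, B)` is a formal concept of the context `(G, M, I)`. -/
def IsConcept {G M : Type*} (I : G → M → Prop) (A : Set G) (B : Set M) : Prop :=
  extentPrime I A = B ∧ intentPrime I B = A

/-- Normalized counting measure `ν_G(A) = |A| / |G|`. -/
noncomputable def nuG (G : Type*) [Fintype G] (A : Set G) : ℝ :=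
  (A.ncard : ℝ) / (Fintype.card G : ℝ)

/-- Normalized counting measure `ν_M(B) = |B| / |M|`. -/
noncomputable def nuM (M : Type*) [Fintype M] (B : Set M) : ℝ :=
  (B.ncard : ℝ) / (Fintype.card M : ℝ)

/-- Observable diameter `ObsDiam(𝒟(K); -α)` of the full geometric data set;
note that `sSup ∅ = 0` in `ℝ`. -/
noncomputable def ObsDiamFull {G M : Type*} [Fintype G] [Fintype M]
    (I : G → M → Prop) (α : ℝ) : ℝ :=
  sSup {x : ℝ | ∃ A : Set G, ∃ B : Set M, IsConcept I A B ∧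
    α < nuM M B ∧ nuM M B < 1 - α ∧ x = nuG G A}

/-- Observable diameter `ObsDiam(𝒟ₛ(K); -α)` of the geometric data set restricted
to concepts with minimum support `s`; note that `sSup ∅ = 0` in `ℝ`. -/
noncomputable def ObsDiamS {G M : Type*} [Fintype G] [Fintype M]
    (I : G → M → Prop) (s α : ℝ) : ℝ :=
  sSup {x : ℝ | ∃ A : Set G, ∃ B : Set M, IsConcept I A B ∧ s ≤ nuG G A ∧
    α < nuM M B ∧ nuM M B < 1 - α ∧ x = nuG G A}

/-- `Δ(𝒟(K)) = ∫_0^{1/2} ObsDiam(𝒟(K); -α) dα`. -/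
noncomputable def DeltaFull {G M : Type*} [Fintype G] [Fintype M]
    (I : G → M → Prop) : ℝ :=
  ∫ α in (0:ℝ)..(1/2 : ℝ), ObsDiamFull I α

/-- `Δ(𝒟ₛ(K)) = ∫_0^{1/2} ObsDiam(𝒟ₛ(K); -α) dα`. -/
noncomputable def DeltaS {G M : Type*} [Fintype G] [Fintype M]
    (I : G → M → Prop) (s : ℝ) : ℝ :=
  ∫ α in (0:ℝ)..(1/2 : ℝ), ObsDiamS I s α

theorem obsDiamFull_le_sigma_beyond_cutoff {G M : Type*} [Fintype G] [Fintype M] [Nonempty G] [Nonempty M]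
    (I : G → M → Prop)
    (s : ℝ) (hs : s ∈ Set.Icc (0:ℝ) 1)
    (hne : {α : ℝ | α ∈ Set.Icc (0:ℝ) (1/2) ∧ 0 < ObsDiamS I s α}.Nonempty)
    (σ : ℝ)
    (hσ : IsLeast {v : ℝ | 0 < v ∧ ∃ α ∈ Set.Icc (0:ℝ) (1/2), ObsDiamS I s α = v} σ) :
    ∀ α ∈ Set.Icc (0:ℝ) (1/2),
      sSup {α' : ℝ | α' ∈ Set.Icc (0:ℝ) (1/2) ∧ 0 < ObsDiamS I s α'} < α →
      ObsDiamFull I α ≤ σ := by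
  classical
  intro α hα hsup
  -- finiteness of the defining sets
  have hfinS : ∀ t : ℝ, ({x : ℝ | ∃ A : Set G, ∃ B : Set M, IsConcept I A B ∧ s ≤ nuG G A ∧
      t < nuM M B ∧ nuM M B < 1 - t ∧ x = nuG G A}).Finite := by
    intro t
    refine (Set.finite_range (nuG G)).subset ?_
    rintro x ⟨A, B, -, -, -, -, rfl⟩
    exact ⟨A, rfl⟩
  have hfinF : ({x : ℝ | ∃ A : Set G, ∃ B : Set M, IsConcept I A B ∧
      α < nuM M B ∧ nuM M B < 1 - α ∧ x = nuG G A}).Finite := by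
    refine (Set.finite_range (nuG G)).subset ?_
    rintro x ⟨A, B, -, -, -, rfl⟩
    exact ⟨A, rfl⟩
  obtain ⟨⟨hσpos, α₁, hα₁, hval⟩, -⟩ := hσ
  -- σ is attained, hence s ≤ σ
  have hsσ : s ≤ σ := by
    rcases Set.eq_empty_or_nonempty {x : ℝ | ∃ A : Set G, ∃ B : Set M, IsConcept I A B ∧
        s ≤ nuG G A ∧ α₁ < nuM M B ∧ nuM M B < 1 - α₁ ∧ x = nuG G A} with h | h
    · exfalso
      have : ObsDiamS I s α₁ = 0 := by
        unfold ObsDiamS; rw [h]; exact Real.sSup_empty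
      rw [hval] at this; linarith
    · have hmem : σ ∈ {x : ℝ | ∃ A : Set G, ∃ B : Set M, IsConcept I A B ∧
          s ≤ nuG G A ∧ α₁ < nuM M B ∧ nuM M B < 1 - α₁ ∧ x = nuG G A} := by
        rw [← hval]
        exact h.csSup_mem (hfinS α₁)
      obtain ⟨A₁, B₁, -, hsA, -, -, hσeq⟩ := hmem
      rw [hσeq]; exact hsA
  -- bound each element of the full set by σ
  refine Real.sSup_le ?_ (le_of_lt hσpos)
  rintro x ⟨A, B, hc, h1, h2, rfl⟩
  by_cases hcase : s ≤ nuG G A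
  · have hmem : nuG G A ∈ {x : ℝ | ∃ A' : Set G, ∃ B' : Set M, IsConcept I A' B' ∧
        s ≤ nuG G A' ∧ α < nuM M B' ∧ nuM M B' < 1 - α ∧ x = nuG G A'} :=
      ⟨A, B, hc, hcase, h1, h2, rfl⟩
    have hle : nuG G A ≤ ObsDiamS I s α := le_csSup ((hfinS α).bddAbove) hmem
    by_contra hcon
    push_neg at hcon
    have hApos : 0 < nuG G A := hσpos.trans hcon
    have hposα : 0 < ObsDiamS I s α := lt_of_lt_of_le hApos hle
    have hmemα : α ∈ {α' : ℝ | α' ∈ Set.Icc (0:ℝ) (1/2) ∧ 0 < ObsDiamS I s α'} := ⟨hα, hposα⟩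
    have hbdd : BddAbove {α' : ℝ | α' ∈ Set.Icc (0:ℝ) (1/2) ∧ 0 < ObsDiamS I s α'} :=
      ⟨1/2, fun y hy => hy.1.2⟩
    have := le_csSup hbdd hmemα
    linarith
  · push_neg at hcase
    linarith
end

section
/- (Upper bound on Δ via minimum support.) Let K = (G, M, I) be a finite formal context and s ∈ [0,1]; suppose the set {α ∈ [0,1/2] : ObsDiam(D_s(K); −α) > 0} is nonempty, put α_{−1} for its supremum and σ_{−1} for the smallest positive value attained by α ↦ ObsDiam(D_s(K); −α) on [0,1/2]. Then Δ(D(K)) ≤ Δ_+(D_s(K)) := Δ(D_s(K)) + (1/2 − α_{−1})·σ_{−1}. -/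
open Set

section Aux

variable {G M : Type*} [Fintype G] [Fintype M] [Nonempty G] [Nonempty M]

lemma nuG_nonneg (A : Set G) : 0 ≤ nuG G A := by
  unfold nuG; positivity

lemma nuG_le_one (A : Set G) : nuG G A ≤ 1 := by
  unfold nuG
  rw [div_le_one (by exact_mod_cast Fintype.card_pos)]
  exact_mod_cast (Set.ncard_le_ncard (Set.subset_univ A) Set.finite_univ).trans
    (by rw [Set.ncard_univ, Nat.card_eq_fintype_card])

lemma bddAbove_full (I : G → M → Prop) (α : ℝ) :
    BddAbove {x : ℝ | ∃ A : Set G, ∃ B : Set M, IsConcept I A B ∧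
      α < nuM M B ∧ nuM M B < 1 - α ∧ x = nuG G A} :=
  ⟨1, fun x ⟨A, _, _, _, _, hx⟩ => hx ▸ nuG_le_one A⟩

lemma bddAbove_s (I : G → M → Prop) (s α : ℝ) :
    BddAbove {x : ℝ | ∃ A : Set G, ∃ B : Set M, IsConcept I A B ∧ s ≤ nuG G A ∧
      α < nuM M B ∧ nuM M B < 1 - α ∧ x = nuG G A} :=
  ⟨1, fun x ⟨A, _, _, _, _, _, hx⟩ => hx ▸ nuG_le_one A⟩

lemma obsDiamFull_nonneg (I : G → M → Prop) (α : ℝ) : 0 ≤ ObsDiamFull I α :=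
  Real.sSup_nonneg fun x ⟨A, _, _, _, _, hx⟩ => hx ▸ nuG_nonneg A

lemma obsDiamS_nonneg (I : G → M → Prop) (s α : ℝ) : 0 ≤ ObsDiamS I s α :=
  Real.sSup_nonneg fun x ⟨A, _, _, _, _, _, hx⟩ => hx ▸ nuG_nonneg A

lemma obsDiamFull_antitone (I : G → M → Prop) : Antitone (ObsDiamFull I) := by
  intro α β hαβ
  rcases eq_empty_or_nonempty {x : ℝ | ∃ A : Set G, ∃ B : Set M, IsConcept I A B ∧
      β < nuM M B ∧ nuM M B < 1 - β ∧ x = nuG G A} with h | h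
  · rw [ObsDiamFull, h, Real.sSup_empty]; exact obsDiamFull_nonneg I α
  · exact csSup_le_csSup (bddAbove_full I α) h
      (fun x ⟨A, B, hc, h1, h2, hx⟩ =>
        ⟨A, B, hc, lt_of_le_of_lt hαβ h1, h2.trans_le (by linarith), hx⟩)

lemma obsDiamS_antitone (I : G → M → Prop) (s : ℝ) : Antitone (ObsDiamS I s) := by
  intro α β hαβ
  rcases eq_empty_or_nonempty {x : ℝ | ∃ A : Set G, ∃ B : Set M, IsConcept I A B ∧
      s ≤ nuG G A ∧ β < nuM M B ∧ nuM M B < 1 - β ∧ x = nuG G A} with h | h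
  · rw [ObsDiamS, h, Real.sSup_empty]; exact obsDiamS_nonneg I s α
  · exact csSup_le_csSup (bddAbove_s I s α) h
      (fun x ⟨A, B, hc, hsA, h1, h2, hx⟩ =>
        ⟨A, B, hc, hsA, lt_of_le_of_lt hαβ h1, h2.trans_le (by linarith), hx⟩)

end Aux

theorem deltaFull_le_deltaPlus {G M : Type*} [Fintype G] [Fintype M] [Nonempty G] [Nonempty M]
    (I : G → M → Prop)
    (s : ℝ) (hs : s ∈ Set.Icc (0:ℝ) 1)
    (hne : {α : ℝ | α ∈ Set.Icc (0:ℝ) (1/2) ∧ 0 < ObsDiamS I s α}.Nonempty)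
    (σ : ℝ)
    (hσ : IsLeast {v : ℝ | 0 < v ∧ ∃ α ∈ Set.Icc (0:ℝ) (1/2), ObsDiamS I s α = v} σ) :
    DeltaFull I ≤ DeltaS I s +
      (1/2 - sSup {α : ℝ | α ∈ Set.Icc (0:ℝ) (1/2) ∧ 0 < ObsDiamS I s α}) * σ := by
  set T := {α : ℝ | α ∈ Set.Icc (0:ℝ) (1/2) ∧ 0 < ObsDiamS I s α} with hT
  set a := sSup T with ha
  have hbddT : BddAbove T := ⟨1/2, fun α hα => hα.1.2⟩
  obtain ⟨α₀, hα₀⟩ := hne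
  have ha0 : 0 ≤ a := le_trans hα₀.1.1 (le_csSup hbddT hα₀)
  have ha2 : a ≤ 1/2 := csSup_le ⟨α₀, hα₀⟩ fun α hα => hα.1.2
  have hσpos : 0 < σ := hσ.1.1
  -- s ≤ σ
  have hsσ : s ≤ σ := by
    obtain ⟨hσ0, α', hα', hval⟩ := hσ.1
    rcases eq_empty_or_nonempty {x : ℝ | ∃ A : Set G, ∃ B : Set M, IsConcept I A B ∧
        s ≤ nuG G A ∧ α' < nuM M B ∧ nuM M B < 1 - α' ∧ x = nuG G A} with h | h
    · rw [ObsDiamS, h, Real.sSup_empty] at hval; exact absurd hval.symm (ne_of_gt hσ0)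
    · obtain ⟨x, hx⟩ := h
      have hxσ : x ≤ σ := hval ▸ le_csSup (bddAbove_s I s α') hx
      obtain ⟨A, B, _, hsA, _, _, hxA⟩ := hx
      exact le_trans (hxA ▸ hsA) hxσ
  -- below a, ObsDiamS ≥ σ
  have h_lt : ∀ α : ℝ, 0 ≤ α → α < a → σ ≤ ObsDiamS I s α := by
    intro α hα0 hαa
    obtain ⟨β, hβT, hαβ⟩ := exists_lt_of_lt_csSup ⟨α₀, hα₀⟩ hαa
    have hpos : 0 < ObsDiamS I s α :=
      lt_of_lt_of_le hβT.2 (obsDiamS_antitone I s hαβ.le)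
    exact hσ.2 ⟨hpos, α, ⟨hα0, le_trans hαa.le ha2⟩, rfl⟩
  -- pointwise bound below a
  have hfg : ∀ α : ℝ, σ ≤ ObsDiamS I s α → ObsDiamFull I α ≤ ObsDiamS I s α := by
    intro α hσα
    refine Real.sSup_le ?_ (le_trans hσpos.le hσα)
    rintro x ⟨A, B, hc, h1, h2, hx⟩
    by_cases hsx : s ≤ nuG G A
    · exact hx ▸ le_csSup (bddAbove_s I s α) ⟨A, B, hc, hsx, h1, h2, rfl⟩
    · exact le_trans (hx ▸ (not_le.mp hsx).le) (le_trans hsσ hσα)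
  -- pointwise bound above a
  have hfσ : ∀ α : ℝ, α ≤ 1/2 → a < α → ObsDiamFull I α ≤ σ := by
    intro α hα2 hαa
    have hαT : α ∉ T := fun h => absurd (le_csSup hbddT h) (not_le.mpr hαa)
    have hα0 : 0 ≤ α := le_trans ha0 hαa.le
    have hg0 : ObsDiamS I s α ≤ 0 := by
      by_contra h
      exact hαT ⟨⟨hα0, hα2⟩, not_le.mp h⟩
    refine Real.sSup_le ?_ hσpos.le
    rintro x ⟨A, B, hc, h1, h2, hx⟩
    by_cases hsx : s ≤ nuG G A
    · have : x ≤ ObsDiamS I s α :=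
        hx ▸ le_csSup (bddAbove_s I s α) ⟨A, B, hc, hsx, h1, h2, rfl⟩
      linarith
    · exact le_trans (hx ▸ (not_le.mp hsx).le) hsσ
  -- integrability
  have intF1 : IntervalIntegrable (ObsDiamFull I) MeasureTheory.volume 0 a :=
    (obsDiamFull_antitone I).intervalIntegrable
  have intF2 : IntervalIntegrable (ObsDiamFull I) MeasureTheory.volume a (1/2) :=
    (obsDiamFull_antitone I).intervalIntegrable
  have intG1 : IntervalIntegrable (ObsDiamS I s) MeasureTheory.volume 0 a :=
    (obsDiamS_antitone I s).intervalIntegrable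
  have intG2 : IntervalIntegrable (ObsDiamS I s) MeasureTheory.volume a (1/2) :=
    (obsDiamS_antitone I s).intervalIntegrable
  have hae : ∀ᵐ α ∂(MeasureTheory.volume : MeasureTheory.Measure ℝ), α ≠ a := by
    rw [MeasureTheory.ae_iff]
    simpa using MeasureTheory.measure_singleton (μ := MeasureTheory.volume) a
  -- bound on [0, a]
  have h1 : (∫ α in (0:ℝ)..a, ObsDiamFull I α) ≤ ∫ α in (0:ℝ)..a, ObsDiamS I s α := by
    refine intervalIntegral.integral_mono_ae_restrict ha0 intF1 intG1 ?_
    have hmem := MeasureTheory.ae_restrict_mem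
      (μ := (MeasureTheory.volume : MeasureTheory.Measure ℝ)) (measurableSet_Icc (a := (0:ℝ)) (b := a))
    filter_upwards [MeasureTheory.ae_restrict_of_ae hae, hmem] with α hαne hαmem
    exact hfg α (h_lt α hαmem.1 (lt_of_le_of_ne hαmem.2 hαne))
  -- bound on [a, 1/2]
  have h2 : (∫ α in a..(1/2:ℝ), ObsDiamFull I α) ≤ (1/2 - a) * σ := by
    have : (∫ α in a..(1/2:ℝ), ObsDiamFull I α) ≤ ∫ _ in a..(1/2:ℝ), σ := by
      refine intervalIntegral.integral_mono_ae_restrict ha2 intF2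
        intervalIntegrable_const ?_
      have hmem := MeasureTheory.ae_restrict_mem
        (μ := (MeasureTheory.volume : MeasureTheory.Measure ℝ)) (measurableSet_Icc (a := a) (b := (1/2:ℝ)))
      filter_upwards [MeasureTheory.ae_restrict_of_ae hae, hmem] with α hαne hαmem
      exact hfσ α hαmem.2 (lt_of_le_of_ne hαmem.1 (Ne.symm hαne))
    simpa [smul_eq_mul] using this
  have h3 : 0 ≤ ∫ α in a..(1/2:ℝ), ObsDiamS I s α :=
    intervalIntegral.integral_nonneg ha2 fun u _ => obsDiamS_nonneg I s u
  have hsplitF : DeltaFull I =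
      (∫ α in (0:ℝ)..a, ObsDiamFull I α) + ∫ α in a..(1/2:ℝ), ObsDiamFull I α :=
    (intervalIntegral.integral_add_adjacent_intervals intF1 intF2).symm
  have hsplitG : DeltaS I s =
      (∫ α in (0:ℝ)..a, ObsDiamS I s α) + ∫ α in a..(1/2:ℝ), ObsDiamS I s α :=
    (intervalIntegral.integral_add_adjacent_intervals intG1 intG2).symm
  rw [hsplitF, hsplitG]
  linarith
end

section
/- (Sandwich bound for Δ.) Let K = (G, M, I) be a finite formal context and s ∈ [0,1]; suppose the set {α ∈ [0,1/2] : ObsDiam(D_s(K); −α) > 0} is nonempty, put α_{−1} for its supremum and σ_{−1} for the smallest positive value attained by α ↦ ObsDiam(D_s(K); −α) on [0,1/2]. With Δ_−(D_s(K)) := Δ(D_s(K)) and Δ_+(D_s(K)) := Δ(D_s(K)) + (1/2 − α_{−1})·σ_{−1}, one has Δ_−(D_s(K)) ≤ Δ(D(K)) ≤ Δ_+(D_s(K)). -/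
open Set

open MeasureTheory

/-
Every concept of support below `s` has `ν_G(A) < s`, so as soon as `ObsDiam(D_s(K); −α)` is
positive (hence `≥ s`) such concepts cannot raise the supremum, and `ObsDiam(D(K); −α)` equals
`ObsDiam(D_s(K); −α)`. Both observable diameters are antitone in `α`, so this happens for all
`α < α_{−1}`; beyond `α_{−1}` the full observable diameter is at most its value at any point
`α₀ ≤ α_{−1}` where the restricted one equals `σ_{−1}`. Integrating gives the upper bound; the
lower bound is the pointwise inequality `ObsDiam(D_s(K); −α) ≤ ObsDiam(D(K); −α)`.
-/

namespace intervalIntegral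

theorem integral_le_integral_add_mul {f g : ℝ → ℝ} {l a u c : ℝ} (hla : l ≤ a) (hau : a ≤ u)
    (hf : IntervalIntegrable f volume l u) (hg : IntervalIntegrable g volume l u)
    (hfg : EqOn f g (Ioo l a)) (hg0 : ∀ x ∈ Ioo a u, 0 ≤ g x)
    (hfc : ∀ x ∈ Ioo a u, f x ≤ c) :
    ∫ x in l..u, f x ≤ (∫ x in l..u, g x) + (u - a) * c := by
  have hsub₁ : uIcc l a ⊆ uIcc l u := uIcc_subset_uIcc_left (mem_uIcc_of_le hla hau)
  have hsub₂ : uIcc a u ⊆ uIcc l u := uIcc_subset_uIcc_right (mem_uIcc_of_le hla hau)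
  have hleft : ∫ x in l..a, f x = ∫ x in l..a, g x := integral_congr_Ioo_of_le hla hfg
  have hright_f : ∫ x in a..u, f x ≤ (u - a) * c := by
    simpa using integral_mono_on_of_le_Ioo hau (hf.mono_set hsub₂) intervalIntegrable_const hfc
  have hright_g : 0 ≤ ∫ x in a..u, g x := by
    simpa using integral_mono_on_of_le_Ioo hau intervalIntegrable_const (hg.mono_set hsub₂) hg0
  rw [← integral_add_adjacent_intervals (hf.mono_set hsub₁) (hf.mono_set hsub₂),
    ← integral_add_adjacent_intervals (hg.mono_set hsub₁) (hg.mono_set hsub₂), hleft]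
  linarith

end intervalIntegral

theorem Antitone.integral_le_integral_add_mul_sSup {f g : ℝ → ℝ} {l u α₀ : ℝ}
    (hf : Antitone f) (hg : Antitone g) (hg0 : ∀ x, 0 ≤ g x) (hfg : ∀ x, 0 < g x → f x = g x)
    (hα₀ : α₀ ∈ Icc l u) (hgα₀ : 0 < g α₀) :
    ∫ x in l..u, f x ≤
      (∫ x in l..u, g x) + (u - sSup {x | x ∈ Icc l u ∧ 0 < g x}) * g α₀ := by
  set T := {x | x ∈ Icc l u ∧ 0 < g x}
  have hT : T.Nonempty := ⟨α₀, hα₀, hgα₀⟩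
  have hTbdd : BddAbove T := ⟨u, fun x hx => hx.1.2⟩
  have hα₀T : α₀ ≤ sSup T := le_csSup hTbdd ⟨hα₀, hgα₀⟩
  have hTu : sSup T ≤ u := csSup_le hT fun x hx => hx.1.2
  have hpos : ∀ x, x < sSup T → 0 < g x := fun x hx => by
    obtain ⟨y, hy, hxy⟩ := exists_lt_of_lt_csSup hT hx
    exact hy.2.trans_le (hg hxy.le)
  refine intervalIntegral.integral_le_integral_add_mul (hα₀.1.trans hα₀T) hTu
    hf.intervalIntegrable hg.intervalIntegrable (fun x hx => hfg x (hpos x hx.2))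
    (fun x _ => hg0 x) fun x hx => ?_
  calc f x ≤ f α₀ := hf (hα₀T.trans hx.1.le)
    _ = g α₀ := hfg α₀ hgα₀

theorem Real.sSup_le_sSup_of_subset_Icc {u v : Set ℝ} (huv : u ⊆ v) (hv : v ⊆ Icc 0 1) :
    sSup u ≤ sSup v := by
  rcases u.eq_empty_or_nonempty with rfl | hu
  · exact Real.sSup_empty ▸ Real.sSup_nonneg fun x hx => (hv hx).1
  · exact csSup_le_csSup ⟨1, fun x hx => (hv hx).2⟩ hu huv

section ObsDiam

variable {G M : Type*} [Fintype G] [Fintype M] (I : G → M → Prop) (s : ℝ)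

theorem nuG_mem_Icc (A : Set G) : nuG G A ∈ Icc (0 : ℝ) 1 := by
  refine ⟨by unfold nuG; positivity, div_le_one_of_le₀ ?_ (Nat.cast_nonneg _)⟩
  exact_mod_cast Nat.card_eq_fintype_card (α := G) ▸ A.ncard_le_card

theorem ObsDiamS_nonneg (α : ℝ) : 0 ≤ ObsDiamS I s α :=
  Real.sSup_nonneg <| by rintro x ⟨A, B, -, -, -, -, rfl⟩; exact (nuG_mem_Icc A).1

theorem ObsDiamS_le_ObsDiamFull (α : ℝ) : ObsDiamS I s α ≤ ObsDiamFull I α :=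
  Real.sSup_le_sSup_of_subset_Icc
    (by rintro x ⟨A, B, hAB, -, hα, hα', rfl⟩; exact ⟨A, B, hAB, hα, hα', rfl⟩)
    (by rintro x ⟨A, B, -, -, -, rfl⟩; exact nuG_mem_Icc A)

theorem antitone_ObsDiamFull : Antitone (ObsDiamFull I) := fun α β hαβ =>
  Real.sSup_le_sSup_of_subset_Icc
    (by
      rintro x ⟨A, B, hAB, hβ, hβ', rfl⟩
      exact ⟨A, B, hAB, hαβ.trans_lt hβ, hβ'.trans_le (by linarith), rfl⟩)
    (by rintro x ⟨A, B, -, -, -, rfl⟩; exact nuG_mem_Icc A)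

theorem antitone_ObsDiamS : Antitone (ObsDiamS I s) := fun α β hαβ =>
  Real.sSup_le_sSup_of_subset_Icc
    (by
      rintro x ⟨A, B, hAB, hs, hβ, hβ', rfl⟩
      exact ⟨A, B, hAB, hs, hαβ.trans_lt hβ, hβ'.trans_le (by linarith), rfl⟩)
    (by rintro x ⟨A, B, -, -, -, -, rfl⟩; exact nuG_mem_Icc A)

theorem ObsDiamFull_eq_ObsDiamS_of_pos {α : ℝ} (h : 0 < ObsDiamS I s α) :
    ObsDiamFull I α = ObsDiamS I s α := by
  set S := {x : ℝ | ∃ A : Set G, ∃ B : Set M, IsConcept I A B ∧ s ≤ nuG G A ∧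
      α < nuM M B ∧ nuM M B < 1 - α ∧ x = nuG G A}
  have hS : ObsDiamS I s α = sSup S := rfl
  have hbdd : BddAbove S := ⟨1, by rintro x ⟨A, B, -, -, -, -, rfl⟩; exact (nuG_mem_Icc A).2⟩
  have hs : s ≤ ObsDiamS I s α := by
    obtain ⟨x, hx⟩ : S.Nonempty :=
      Set.nonempty_iff_ne_empty.2 fun h₀ => h.ne' (by rw [hS, h₀, Real.sSup_empty])
    have hx_le : x ≤ ObsDiamS I s α := le_csSup hbdd hx
    obtain ⟨A, B, -, hsA, -, -, rfl⟩ := hx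
    exact hsA.trans hx_le
  refine le_antisymm (Real.sSup_le ?_ (ObsDiamS_nonneg I s α)) (ObsDiamS_le_ObsDiamFull I s α)
  rintro x ⟨A, B, hAB, hα, hα', rfl⟩
  by_cases hsA : s ≤ nuG G A
  · exact le_csSup hbdd ⟨A, B, hAB, hsA, hα, hα', rfl⟩
  · exact (not_le.1 hsA).le.trans hs

end ObsDiam

theorem delta_sandwich_general {G M : Type*} [Fintype G] [Fintype M]
    (I : G → M → Prop)
    (s : ℝ)
    (σ : ℝ)
    (hσ : IsLeast {v : ℝ | 0 < v ∧ ∃ α ∈ Set.Icc (0:ℝ) (1/2), ObsDiamS I s α = v} σ) :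
    DeltaS I s ≤ DeltaFull I ∧
    DeltaFull I ≤ DeltaS I s +
      (1/2 - sSup {α : ℝ | α ∈ Set.Icc (0:ℝ) (1/2) ∧ 0 < ObsDiamS I s α}) * σ := by
  obtain ⟨⟨hσ0, α₀, hα₀, rfl⟩, -⟩ := hσ
  constructor
  · exact intervalIntegral.integral_mono_on (by norm_num)
      (antitone_ObsDiamS I s).intervalIntegrable (antitone_ObsDiamFull I).intervalIntegrable
      fun α _ => ObsDiamS_le_ObsDiamFull I s α
  · exact (antitone_ObsDiamFull I).integral_le_integral_add_mul_sSup (antitone_ObsDiamS I s)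
      (ObsDiamS_nonneg I s) (fun α => ObsDiamFull_eq_ObsDiamS_of_pos I s) hα₀ hσ0

theorem delta_sandwich {G M : Type*} [Fintype G] [Fintype M] [Nonempty G] [Nonempty M]
    (I : G → M → Prop)
    (s : ℝ) (hs : s ∈ Set.Icc (0:ℝ) 1)
    (hne : {α : ℝ | α ∈ Set.Icc (0:ℝ) (1/2) ∧ 0 < ObsDiamS I s α}.Nonempty)
    (σ : ℝ)
    (hσ : IsLeast {v : ℝ | 0 < v ∧ ∃ α ∈ Set.Icc (0:ℝ) (1/2), ObsDiamS I s α = v} σ) :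
    DeltaS I s ≤ DeltaFull I ∧
    DeltaFull I ≤ DeltaS I s +
      (1/2 - sSup {α : ℝ | α ∈ Set.Icc (0:ℝ) (1/2) ∧ 0 < ObsDiamS I s α}) * σ :=
  delta_sandwich_general I s σ hσ
end
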